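/- A signed complete bigraph (a signed bigraph whose underlying graph is a complete bipartite graph) is a chordal signed bigraph if and only if it contains none of the five signed graphs M_1, M_2, M_3, M_4, M_5 as an induced subgraph. -/

import Mathlib

universe u

/-! ## Basic unsigned notions for bipartite graphs -/

/-- `G` has an induced cycle of length at least 6 (signs, if any, are arbitrary). -/
def HasLongInducedCycle {V : Type u} (G : SimpleGraph V) : Prop :=
  ∃ n : ℕ, 6 ≤ n ∧ ∃ f : ZMod n → V, Function.Injective f ∧
    ∀ i j : ZMod n, G.Adj (f i) (f j) ↔ (j = i + 1 ∨ i = j + 1)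

/-- A graph is separable if it contains an induced `2K₂`. -/
def IsSeparableGraph {V : Type u} (G : SimpleGraph V) : Prop :=
  ∃ a b c d : V, [a, b, c, d].Pairwise (· ≠ ·) ∧
    G.Adj a b ∧ G.Adj c d ∧ ¬ G.Adj a c ∧ ¬ G.Adj a d ∧ ¬ G.Adj b c ∧ ¬ G.Adj b d

/-- An edge `ab` of a bipartite graph is simplicial if every vertex of `N(a) - {b}`
is adjacent to every vertex of `N(b) - {a}`. -/
def SimplicialEdge {V : Type u} (G : SimpleGraph V) (a b : V) : Prop :=
  G.Adj a b ∧ ∀ c ∈ G.neighborSet a \ {b}, ∀ d ∈ G.neighborSet b \ {a}, G.Adj c d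

/-- A canonical ordering of a bigraph with bipartition given by `side`
(`X` is the `side = true` part, `Y` the `side = false` part): the neighbourhoods of
the `x`'s are decreasing and those of the `y`'s are increasing. -/
def IsCanonicalOrdering {V : Type u} (G : SimpleGraph V) (side : V → Bool)
    {α β : ℕ} (x : Fin α → V) (y : Fin β → V) : Prop :=
  Function.Injective x ∧ Function.Injective y ∧
  (∀ w : V, side w = true ↔ w ∈ Set.range x) ∧
  (∀ w : V, side w = false ↔ w ∈ Set.range y) ∧
  (∀ i j : Fin α, i ≤ j → G.neighborSet (x j) ⊆ G.neighborSet (x i)) ∧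
  (∀ i j : Fin β, i ≤ j → G.neighborSet (y i) ⊆ G.neighborSet (y j))

/-- `H` is a non-trivial (i.e. containing at least one edge) connected component
of `G - S`. -/
def IsNontrivialComponentOf {V : Type u} (G : SimpleGraph V) (S H : Set V) : Prop :=
  H ⊆ Sᶜ ∧ (G.induce H).Connected ∧
  (∀ a ∈ H, ∀ b ∈ Sᶜ, G.Adj a b → b ∈ H) ∧
  (∃ a ∈ H, ∃ b ∈ H, G.Adj a b)

/-- `S` minimally separates the non-trivial components `H` and `H'` of `G - S`:
every vertex of `S` has a neighbour in `H` and a neighbour in `H'`. -/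
def MinimallySeparates {V : Type u} (G : SimpleGraph V) (S H H' : Set V) : Prop :=
  IsNontrivialComponentOf G S H ∧ IsNontrivialComponentOf G S H' ∧ H ≠ H' ∧
  ∀ s ∈ S, (∃ a ∈ H, G.Adj s a) ∧ (∃ a ∈ H', G.Adj s a)

/-! ## Signed bigraphs -/

/-- A signed bigraph: a bipartite graph (with bipartition recorded by `side`)
whose edges carry a sign (`true` = positive, `false` = negative). -/
structure SignedBigraph (V : Type u) where
  graph : SimpleGraph V
  sign : V → V → Bool
  sign_symm : ∀ a b : V, sign a b = sign b a
  side : V → Bool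
  bipartite : ∀ ⦃a b : V⦄, graph.Adj a b → side a ≠ side b

namespace SignedBigraph

variable {V : Type u}

def Adj (G : SignedBigraph V) (a b : V) : Prop := G.graph.Adj a b

/-- `N(ab) = (N(a) ∪ N(b)) - {a, b}`. -/
def edgeNbhd (G : SignedBigraph V) (a b : V) : Set V :=
  (G.graph.neighborSet a ∪ G.graph.neighborSet b) \ {a, b}

/-- The edge `ab` is signed simplicial: `N(ab)` induces a positive biclique. -/
def SignedSimplicial (G : SignedBigraph V) (a b : V) : Prop :=
  G.Adj a b ∧
    ∀ c ∈ G.edgeNbhd a b, ∀ d ∈ G.edgeNbhd a b,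
      G.side c ≠ G.side d → (G.Adj c d ∧ G.sign c d = true)

/-- Delete a set of edges from a signed bigraph (keeping all vertices). -/
def deleteEdges (G : SignedBigraph V) (s : Set (Sym2 V)) : SignedBigraph V where
  graph := G.graph.deleteEdges s
  sign := G.sign
  sign_symm := G.sign_symm
  side := G.side
  bipartite := by
    intro a b h
    exact G.bipartite (SimpleGraph.deleteEdges_adj.mp h).1

/-- The induced signed subgraph on a set of vertices. -/
def induce (G : SignedBigraph V) (A : Set V) : SignedBigraph A where
  graph := G.graph.induce A
  sign a b := G.sign a b
  sign_symm a b := G.sign_symm a b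
  side a := G.side a
  bipartite := by
    intro a b h
    exact G.bipartite h

/-- A chordal signed bigraph: the edges can be ordered `e₁, …, e_m` so that each `eᵢ`
is a signed simplicial edge of the signed bigraph obtained by deleting `e₁, …, e_{i-1}`. -/
def IsChordal (G : SignedBigraph V) : Prop :=
  ∃ l : List (Sym2 V), l.Nodup ∧ (∀ e, e ∈ G.graph.edgeSet ↔ e ∈ l) ∧
    ∀ (i : ℕ) (h : i < l.length), ∃ a b : V,
      l.get ⟨i, h⟩ = s(a, b) ∧
      (G.deleteEdges {e | e ∈ l.take i}).SignedSimplicial a b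

/-! ## Forbidden patterns F₁ – F₆, D, long cycles -/

/-- `G` contains the all-negative 4-cycle `F₁` as an induced subgraph. -/
def HasF1 (G : SignedBigraph V) : Prop :=
  ∃ u1 u2 v1 v2 : V,
    [u1, u2, v1, v2].Pairwise (· ≠ ·) ∧
    G.Adj u1 v1 ∧ G.Adj u1 v2 ∧ G.Adj u2 v1 ∧ G.Adj u2 v2 ∧
    ¬ G.Adj u1 u2 ∧ ¬ G.Adj v1 v2 ∧
    G.sign u1 v1 = false ∧ G.sign u1 v2 = false ∧
    G.sign u2 v1 = false ∧ G.sign u2 v2 = false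

/-- `G` contains a member of `F₂` (a signed `K_{2,3}`) as an induced subgraph. -/
def HasF2 (G : SignedBigraph V) : Prop :=
  ∃ u1 u2 v1 v2 v3 : V,
    [u1, u2, v1, v2, v3].Pairwise (· ≠ ·) ∧
    G.Adj u1 v1 ∧ G.Adj u1 v2 ∧ G.Adj u1 v3 ∧
    G.Adj u2 v1 ∧ G.Adj u2 v2 ∧ G.Adj u2 v3 ∧
    ¬ G.Adj u1 u2 ∧ ¬ G.Adj v1 v2 ∧ ¬ G.Adj v1 v3 ∧ ¬ G.Adj v2 v3 ∧
    G.sign u1 v1 = false ∧ G.sign u1 v2 = false ∧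
    G.sign u2 v2 = false ∧ G.sign u2 v3 = false

/-- `G` contains a member of `F₃` (a signed `K_{2,4}`) as an induced subgraph. -/
def HasF3 (G : SignedBigraph V) : Prop :=
  ∃ u1 u2 v1 v2 v3 v4 : V,
    [u1, u2, v1, v2, v3, v4].Pairwise (· ≠ ·) ∧
    G.Adj u1 v1 ∧ G.Adj u1 v2 ∧ G.Adj u1 v3 ∧ G.Adj u1 v4 ∧
    G.Adj u2 v1 ∧ G.Adj u2 v2 ∧ G.Adj u2 v3 ∧ G.Adj u2 v4 ∧
    ¬ G.Adj u1 u2 ∧ ¬ G.Adj v1 v2 ∧ ¬ G.Adj v1 v3 ∧ ¬ G.Adj v1 v4 ∧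
    ¬ G.Adj v2 v3 ∧ ¬ G.Adj v2 v4 ∧ ¬ G.Adj v3 v4 ∧
    G.sign u1 v1 = false ∧ G.sign u1 v2 = false ∧
    G.sign u2 v3 = false ∧ G.sign u2 v4 = false

/-- `G` contains a member of `F₄` (a signed `K_{3,3}` with negative perfect matching)
as an induced subgraph. -/
def HasF4 (G : SignedBigraph V) : Prop :=
  ∃ u1 u2 u3 v1 v2 v3 : V,
    [u1, u2, u3, v1, v2, v3].Pairwise (· ≠ ·) ∧
    G.Adj u1 v1 ∧ G.Adj u1 v2 ∧ G.Adj u1 v3 ∧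
    G.Adj u2 v1 ∧ G.Adj u2 v2 ∧ G.Adj u2 v3 ∧
    G.Adj u3 v1 ∧ G.Adj u3 v2 ∧ G.Adj u3 v3 ∧
    ¬ G.Adj u1 u2 ∧ ¬ G.Adj u1 u3 ∧ ¬ G.Adj u2 u3 ∧
    ¬ G.Adj v1 v2 ∧ ¬ G.Adj v1 v3 ∧ ¬ G.Adj v2 v3 ∧
    G.sign u1 v1 = false ∧ G.sign u2 v2 = false ∧ G.sign u3 v3 = false

/-- `G` contains a member of `F₅` as an induced subgraph. -/
def HasF5 (G : SignedBigraph V) : Prop :=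
  ∃ x1 x2 x3 y1 y2 y3 : V,
    [x1, x2, x3, y1, y2, y3].Pairwise (· ≠ ·) ∧
    G.Adj x1 y1 ∧ G.Adj x1 y2 ∧ ¬ G.Adj x1 y3 ∧
    G.Adj x2 y1 ∧ G.Adj x2 y2 ∧ G.Adj x2 y3 ∧
    G.Adj x3 y1 ∧ G.Adj x3 y2 ∧ G.Adj x3 y3 ∧
    ¬ G.Adj x1 x2 ∧ ¬ G.Adj x1 x3 ∧ ¬ G.Adj x2 x3 ∧
    ¬ G.Adj y1 y2 ∧ ¬ G.Adj y1 y3 ∧ ¬ G.Adj y2 y3 ∧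
    G.sign x2 y1 = false ∧ G.sign x3 y2 = false

/-- `G` contains a member of `F₆` as an induced subgraph. -/
def HasF6 (G : SignedBigraph V) : Prop :=
  ∃ x1 x2 x3 x4 y1 y2 y3 y4 : V,
    [x1, x2, x3, x4, y1, y2, y3, y4].Pairwise (· ≠ ·) ∧
    G.Adj x1 y1 ∧ G.Adj x1 y2 ∧ ¬ G.Adj x1 y3 ∧ ¬ G.Adj x1 y4 ∧
    G.Adj x2 y1 ∧ G.Adj x2 y2 ∧ ¬ G.Adj x2 y3 ∧ ¬ G.Adj x2 y4 ∧
    G.Adj x3 y1 ∧ G.Adj x3 y2 ∧ G.Adj x3 y3 ∧ G.Adj x3 y4 ∧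
    G.Adj x4 y1 ∧ G.Adj x4 y2 ∧ G.Adj x4 y3 ∧ G.Adj x4 y4 ∧
    ¬ G.Adj x1 x2 ∧ ¬ G.Adj x1 x3 ∧ ¬ G.Adj x1 x4 ∧
    ¬ G.Adj x2 x3 ∧ ¬ G.Adj x2 x4 ∧ ¬ G.Adj x3 x4 ∧
    ¬ G.Adj y1 y2 ∧ ¬ G.Adj y1 y3 ∧ ¬ G.Adj y1 y4 ∧
    ¬ G.Adj y2 y3 ∧ ¬ G.Adj y2 y4 ∧ ¬ G.Adj y3 y4 ∧
    G.sign x1 y1 = false ∧ G.sign x2 y1 = false ∧ G.sign x3 y2 = false ∧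
    G.sign x4 y3 = false ∧ G.sign x4 y4 = false

/-- `G` contains a member of `D` (a 6-cycle `x₁y₁x₂y₃x₃y₂x₁` plus a negative chord
`x₂y₂`) as an induced subgraph. -/
def HasD (G : SignedBigraph V) : Prop :=
  ∃ x1 x2 x3 y1 y2 y3 : V,
    [x1, x2, x3, y1, y2, y3].Pairwise (· ≠ ·) ∧
    G.Adj x1 y1 ∧ G.Adj y1 x2 ∧ G.Adj x2 y3 ∧ G.Adj y3 x3 ∧
    G.Adj x3 y2 ∧ G.Adj y2 x1 ∧
    G.Adj x2 y2 ∧ G.sign x2 y2 = false ∧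
    ¬ G.Adj x1 y3 ∧ ¬ G.Adj x3 y1 ∧
    ¬ G.Adj x1 x2 ∧ ¬ G.Adj x1 x3 ∧ ¬ G.Adj x2 x3 ∧
    ¬ G.Adj y1 y2 ∧ ¬ G.Adj y1 y3 ∧ ¬ G.Adj y2 y3

/-- `G` contains an induced signed cycle of length at least 6. -/
def HasLongCycle (G : SignedBigraph V) : Prop :=
  HasLongInducedCycle G.graph

/-! ## Minimal forbidden patterns M₁ – M₅ for complete bigraphs -/

def HasM1 (G : SignedBigraph V) : Prop := G.HasF1

def HasM2 (G : SignedBigraph V) : Prop :=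
  ∃ u1 u2 v1 v2 v3 : V,
    [u1, u2, v1, v2, v3].Pairwise (· ≠ ·) ∧
    G.Adj u1 v1 ∧ G.Adj u1 v2 ∧ G.Adj u1 v3 ∧
    G.Adj u2 v1 ∧ G.Adj u2 v2 ∧ G.Adj u2 v3 ∧
    ¬ G.Adj u1 u2 ∧ ¬ G.Adj v1 v2 ∧ ¬ G.Adj v1 v3 ∧ ¬ G.Adj v2 v3 ∧
    G.sign u1 v1 = false ∧ G.sign u1 v2 = false ∧
    G.sign u2 v2 = false ∧ G.sign u2 v3 = false ∧
    G.sign u1 v3 = true ∧ G.sign u2 v1 = true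

def HasM3 (G : SignedBigraph V) : Prop :=
  ∃ u1 u2 v1 v2 v3 v4 : V,
    [u1, u2, v1, v2, v3, v4].Pairwise (· ≠ ·) ∧
    G.Adj u1 v1 ∧ G.Adj u1 v2 ∧ G.Adj u1 v3 ∧ G.Adj u1 v4 ∧
    G.Adj u2 v1 ∧ G.Adj u2 v2 ∧ G.Adj u2 v3 ∧ G.Adj u2 v4 ∧
    ¬ G.Adj u1 u2 ∧ ¬ G.Adj v1 v2 ∧ ¬ G.Adj v1 v3 ∧ ¬ G.Adj v1 v4 ∧
    ¬ G.Adj v2 v3 ∧ ¬ G.Adj v2 v4 ∧ ¬ G.Adj v3 v4 ∧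
    G.sign u1 v1 = false ∧ G.sign u1 v2 = false ∧
    G.sign u2 v3 = false ∧ G.sign u2 v4 = false ∧
    G.sign u1 v3 = true ∧ G.sign u1 v4 = true ∧
    G.sign u2 v1 = true ∧ G.sign u2 v2 = true

def HasM4 (G : SignedBigraph V) : Prop :=
  ∃ u1 u2 u3 v1 v2 v3 : V,
    [u1, u2, u3, v1, v2, v3].Pairwise (· ≠ ·) ∧
    G.Adj u1 v1 ∧ G.Adj u1 v2 ∧ G.Adj u1 v3 ∧
    G.Adj u2 v1 ∧ G.Adj u2 v2 ∧ G.Adj u2 v3 ∧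
    G.Adj u3 v1 ∧ G.Adj u3 v2 ∧ G.Adj u3 v3 ∧
    ¬ G.Adj u1 u2 ∧ ¬ G.Adj u1 u3 ∧ ¬ G.Adj u2 u3 ∧
    ¬ G.Adj v1 v2 ∧ ¬ G.Adj v1 v3 ∧ ¬ G.Adj v2 v3 ∧
    G.sign u1 v1 = false ∧ G.sign u2 v2 = false ∧ G.sign u3 v3 = false ∧
    G.sign u1 v2 = true ∧ G.sign u1 v3 = true ∧ G.sign u2 v1 = true ∧
    G.sign u2 v3 = true ∧ G.sign u3 v1 = true ∧ G.sign u3 v2 = true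

def HasM5 (G : SignedBigraph V) : Prop :=
  ∃ x1 x2 x3 y1 y2 y3 : V,
    [x1, x2, x3, y1, y2, y3].Pairwise (· ≠ ·) ∧
    G.Adj x1 y1 ∧ G.Adj x1 y2 ∧ G.Adj x1 y3 ∧
    G.Adj x2 y1 ∧ G.Adj x2 y2 ∧ G.Adj x2 y3 ∧
    G.Adj x3 y1 ∧ G.Adj x3 y2 ∧ G.Adj x3 y3 ∧
    ¬ G.Adj x1 x2 ∧ ¬ G.Adj x1 x3 ∧ ¬ G.Adj x2 x3 ∧
    ¬ G.Adj y1 y2 ∧ ¬ G.Adj y1 y3 ∧ ¬ G.Adj y2 y3 ∧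
    G.sign x1 y1 = false ∧ G.sign x1 y2 = false ∧
    G.sign x2 y2 = false ∧ G.sign x3 y3 = false ∧
    G.sign x1 y3 = true ∧ G.sign x2 y1 = true ∧ G.sign x2 y3 = true ∧
    G.sign x3 y1 = true ∧ G.sign x3 y2 = true

/-! ## The patterns W₁ – W₆ (relativized to an ambient vertex set `A`, with the
distinguished vertices being exactly the vertices in `S`). -/

def HasW1In (G : SignedBigraph V) (A S : Set V) : Prop :=
  ∃ u y x z : V, u ∈ A ∧ y ∈ A ∧ x ∈ A ∧ z ∈ A ∧
    [u, y, x, z].Pairwise (· ≠ ·) ∧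
    G.Adj u y ∧ G.Adj u z ∧ G.Adj x y ∧ G.Adj x z ∧
    ¬ G.Adj u x ∧ ¬ G.Adj y z ∧
    G.sign x y = false ∧ G.sign x z = false ∧
    x ∈ S ∧ u ∉ S ∧ y ∉ S ∧ z ∉ S

def HasW2In (G : SignedBigraph V) (A S : Set V) : Prop :=
  ∃ u y v z p : V, u ∈ A ∧ y ∈ A ∧ v ∈ A ∧ z ∈ A ∧ p ∈ A ∧
    [u, y, v, z, p].Pairwise (· ≠ ·) ∧
    G.Adj u y ∧ G.Adj u z ∧ G.Adj v y ∧ G.Adj v z ∧ G.Adj p v ∧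
    ¬ G.Adj u v ∧ ¬ G.Adj y z ∧ ¬ G.Adj p u ∧ ¬ G.Adj p y ∧ ¬ G.Adj p z ∧
    G.sign v y = false ∧ G.sign v z = false ∧
    p ∈ S ∧ u ∉ S ∧ y ∉ S ∧ v ∉ S ∧ z ∉ S

def HasW3In (G : SignedBigraph V) (A S : Set V) : Prop :=
  ∃ u y v z p : V, u ∈ A ∧ y ∈ A ∧ v ∈ A ∧ z ∈ A ∧ p ∈ A ∧
    [u, y, v, z, p].Pairwise (· ≠ ·) ∧
    G.Adj u y ∧ G.Adj u z ∧ G.Adj v y ∧ G.Adj v z ∧ G.Adj p v ∧ G.Adj p u ∧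
    ¬ G.Adj u v ∧ ¬ G.Adj y z ∧ ¬ G.Adj p y ∧ ¬ G.Adj p z ∧
    G.sign v y = false ∧ G.sign v z = false ∧ G.sign p u = false ∧
    p ∈ S ∧ u ∉ S ∧ y ∉ S ∧ v ∉ S ∧ z ∉ S

def HasW4In (G : SignedBigraph V) (A S : Set V) : Prop :=
  ∃ u y c z p q : V, u ∈ A ∧ y ∈ A ∧ c ∈ A ∧ z ∈ A ∧ p ∈ A ∧ q ∈ A ∧
    [u, y, c, z, p, q].Pairwise (· ≠ ·) ∧
    G.Adj u y ∧ G.Adj u z ∧ G.Adj c y ∧ G.Adj c z ∧ G.Adj p c ∧ G.Adj p u ∧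
    G.Adj q p ∧
    ¬ G.Adj u c ∧ ¬ G.Adj y z ∧ ¬ G.Adj p y ∧ ¬ G.Adj p z ∧
    ¬ G.Adj q u ∧ ¬ G.Adj q y ∧ ¬ G.Adj q c ∧ ¬ G.Adj q z ∧
    G.sign c y = false ∧ G.sign c z = false ∧ G.sign p u = false ∧
    q ∈ S ∧ u ∉ S ∧ y ∉ S ∧ c ∉ S ∧ z ∉ S ∧ p ∉ S

def HasW5In (G : SignedBigraph V) (A S : Set V) : Prop :=
  ∃ u y v z x : V, u ∈ A ∧ y ∈ A ∧ v ∈ A ∧ z ∈ A ∧ x ∈ A ∧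
    [u, y, v, z, x].Pairwise (· ≠ ·) ∧
    G.Adj u y ∧ G.Adj u z ∧ G.Adj v y ∧ G.Adj v z ∧ G.Adj x v ∧ G.Adj x u ∧
    ¬ G.Adj u v ∧ ¬ G.Adj y z ∧ ¬ G.Adj x y ∧ ¬ G.Adj x z ∧
    G.sign v y = false ∧ G.sign x u = false ∧
    x ∈ S ∧ y ∈ S ∧ u ∉ S ∧ v ∉ S ∧ z ∉ S

def HasW6In (G : SignedBigraph V) (A S : Set V) : Prop :=
  ∃ u y v z x : V, u ∈ A ∧ y ∈ A ∧ v ∈ A ∧ z ∈ A ∧ x ∈ A ∧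
    [u, y, v, z, x].Pairwise (· ≠ ·) ∧
    G.Adj u y ∧ G.Adj u z ∧ G.Adj v y ∧ G.Adj v z ∧ G.Adj x v ∧
    ¬ G.Adj u v ∧ ¬ G.Adj y z ∧ ¬ G.Adj x u ∧ ¬ G.Adj x y ∧ ¬ G.Adj x z ∧
    G.sign v y = false ∧
    x ∈ S ∧ y ∈ S ∧ u ∉ S ∧ v ∉ S ∧ z ∉ S

/-! ## Tadpoles, sums and joins -/

/-- The vertex set of a tadpole with heads `w, y, z` and path vertices `x`. -/
def tadVerts {n : ℕ} (w y z : V) (x : Fin n → V) : Set V :=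
  {w, y, z} ∪ Set.range x

/-- The data `(w, y, z, x)` forms an induced tadpole in `G`:
`w, y, z, x ⟨k⟩` induce a 4-cycle whose edges `x ⟨k⟩ y` and `x ⟨k⟩ z` are negative,
together with the induced path `x ⟨k⟩, x ⟨k-1⟩, …, x 0`; the vertex `x 0` is the end
and `w, y, z` are the heads.  If `t2 = true` the tadpole is of type 2: there is
additionally a negative edge from `w` to `x ⟨k-1⟩`.
(The paper's parameter `k ≥ 1` corresponds to `k + 1` here.) -/
structure IsInducedTadpole (G : SignedBigraph V) (k : ℕ) (t2 : Bool)
    (w y z : V) (x : Fin (k + 1) → V) : Prop where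
  t2_len : t2 = true → 1 ≤ k
  inj : Function.Injective x
  w_notmem : ∀ i, w ≠ x i
  y_notmem : ∀ i, y ≠ x i
  z_notmem : ∀ i, z ≠ x i
  wy : w ≠ y
  wz : w ≠ z
  yz : y ≠ z
  adj_wy : G.Adj w y
  adj_wz : G.Adj w z
  not_adj_yz : ¬ G.Adj y z
  adj_path : ∀ i j : Fin (k + 1), G.Adj (x i) (x j) ↔ (i.1 + 1 = j.1 ∨ j.1 + 1 = i.1)
  adj_y : ∀ i : Fin (k + 1), G.Adj y (x i) ↔ i.1 = k
  adj_z : ∀ i : Fin (k + 1), G.Adj z (x i) ↔ i.1 = k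
  adj_w : ∀ i : Fin (k + 1), G.Adj w (x i) ↔ (t2 = true ∧ i.1 + 1 = k)
  sign_y : ∀ i : Fin (k + 1), i.1 = k → G.sign (x i) y = false
  sign_z : ∀ i : Fin (k + 1), i.1 = k → G.sign (x i) z = false
  sign_w : ∀ i : Fin (k + 1), t2 = true → i.1 + 1 = k → G.sign w (x i) = false

/-- `G` contains a sum of two tadpoles (identified at their ends) as an induced
subgraph. -/
def HasTadpoleSum (G : SignedBigraph V) : Prop :=
  ∃ (k k' : ℕ) (t t' : Bool) (w y z w' y' z' : V)
    (x : Fin (k + 1) → V) (x' : Fin (k' + 1) → V),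
    G.IsInducedTadpole k t w y z x ∧ G.IsInducedTadpole k' t' w' y' z' x' ∧
    x 0 = x' 0 ∧
    tadVerts w y z x ∩ tadVerts w' y' z' x' = {x 0} ∧
    ∀ a ∈ tadVerts w y z x, ∀ b ∈ tadVerts w' y' z' x',
      a ≠ x 0 → b ≠ x' 0 → ¬ G.Adj a b

/-- `G` contains a join of two tadpoles as an induced subgraph: two disjoint induced
tadpoles such that the edges between them are exactly those joining the end of each
tadpole to all vertices of the other tadpole in the opposite partite set; all these
edges are positive, except that the edge from an end to the head `w` of the other
tadpole may be of either sign when that tadpole is a member of `W₁` (i.e. has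
`k = 0` and is of type 1), in which case the ends are required to be adjacent. -/
def HasTadpoleJoin (G : SignedBigraph V) : Prop :=
  ∃ (k k' : ℕ) (t t' : Bool) (w y z w' y' z' : V)
    (x : Fin (k + 1) → V) (x' : Fin (k' + 1) → V),
    G.IsInducedTadpole k t w y z x ∧ G.IsInducedTadpole k' t' w' y' z' x' ∧
    Disjoint (tadVerts w y z x) (tadVerts w' y' z' x') ∧
    (∀ a ∈ tadVerts w y z x, ∀ b ∈ tadVerts w' y' z' x',
      (G.Adj a b ↔ ((a = x 0 ∨ b = x' 0) ∧ G.side a ≠ G.side b))) ∧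
    ((k = 0 ∧ t = false) ∨ (k' = 0 ∧ t' = false) → G.side (x 0) ≠ G.side (x' 0)) ∧
    (∀ a ∈ tadVerts w y z x, ∀ b ∈ tadVerts w' y' z' x', G.Adj a b →
      ¬ (a = x 0 ∧ b = w' ∧ k' = 0 ∧ t' = false) →
      ¬ (a = w ∧ b = x' 0 ∧ k = 0 ∧ t = false) →
      G.sign a b = true)

/-- `G` contains a member of
`ℱ = F₁ ∪ F₂ ∪ F₃ ∪ F₄ ∪ F₅ ∪ F₆ ∪ 𝒞 ∪ D ∪ 𝒮 ∪ 𝒥` as an induced subgraph. -/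
def HasForbidden (G : SignedBigraph V) : Prop :=
  G.HasF1 ∨ G.HasF2 ∨ G.HasF3 ∨ G.HasF4 ∨ G.HasF5 ∨ G.HasF6 ∨
  G.HasLongCycle ∨ G.HasD ∨ G.HasTadpoleSum ∨ G.HasTadpoleJoin

/-- `G` is `ℱ`-free. -/
def FFree (G : SignedBigraph V) : Prop := ¬ G.HasForbidden

end SignedBigraph

/-! ## Concrete complete signed bipartite graphs (for the graphs M₁ – M₅) -/

/-- The complete bipartite graph on `Fin a ⊕ Fin b`. -/
def cbsGraph (a b : ℕ) : SimpleGraph (Fin a ⊕ Fin b) where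
  Adj u v := u.isLeft ≠ v.isLeft
  symm := ⟨fun _ _ h => Ne.symm h⟩
  loopless := ⟨fun _ h => h rfl⟩

def cbsSign {a b : ℕ} (sgn : Fin a → Fin b → Bool) :
    Fin a ⊕ Fin b → Fin a ⊕ Fin b → Bool
  | Sum.inl i, Sum.inr j => sgn i j
  | Sum.inr j, Sum.inl i => sgn i j
  | _, _ => true

/-- The complete signed bipartite graph with parts `Fin a`, `Fin b`, and signs given
by `sgn`. -/
def completeSignedBigraph (a b : ℕ) (sgn : Fin a → Fin b → Bool) :
    SignedBigraph (Fin a ⊕ Fin b) where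
  graph := cbsGraph a b
  sign := cbsSign sgn
  sign_symm := by
    intro u v
    cases u <;> cases v <;> rfl
  side := Sum.isLeft
  bipartite := fun _ _ h => h

/-- `M₁`: the all-negative 4-cycle. -/
def Mgraph1 : SignedBigraph (Fin 2 ⊕ Fin 2) :=
  completeSignedBigraph 2 2 (fun _ _ => false)

/-- `M₂`. -/
def Mgraph2 : SignedBigraph (Fin 2 ⊕ Fin 3) :=
  completeSignedBigraph 2 3
    (fun i j => ! decide ((i = 0 ∧ (j = 0 ∨ j = 1)) ∨ (i = 1 ∧ (j = 1 ∨ j = 2))))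

/-- `M₃`. -/
def Mgraph3 : SignedBigraph (Fin 2 ⊕ Fin 4) :=
  completeSignedBigraph 2 4
    (fun i j => ! decide ((i = 0 ∧ (j = 0 ∨ j = 1)) ∨ (i = 1 ∧ (j = 2 ∨ j = 3))))

/-- `M₄`. -/
def Mgraph4 : SignedBigraph (Fin 3 ⊕ Fin 3) :=
  completeSignedBigraph 3 3 (fun i j => ! decide ((i : ℕ) = (j : ℕ)))

/-- `M₅`. -/
def Mgraph5 : SignedBigraph (Fin 3 ⊕ Fin 3) :=
  completeSignedBigraph 3 3
    (fun i j => ! decide ((i = 0 ∧ (j = 0 ∨ j = 1)) ∨ (i = 1 ∧ j = 1) ∨ (i = 2 ∧ j = 2)))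

/-!
In a complete bigraph every vertex other than `a, b` lies in `N(ab)`, so an edge `ab` is signed
simplicial exactly when every negative edge meets `a` or `b`. Hence the first edge of an
elimination ordering is an edge `rc` meeting all negative edges. Conversely, given such an edge,
list the edges `xy` (`x` on the side of `r`) lexicographically for a vertex order in which `r` and
`c` come first on their sides: when `xy` is removed, the edges spanned by its neighbourhood are the
`x'y'` with `x' > x` and `y' > y`, which avoid `r` and `c` and are therefore positive.

It remains to see that such an edge exists iff no `Mᵢ` occurs. No `Mᵢ` has one. If no `Mᵢ` occurs,
the negative edges contain no `C₄`, no `P₅`, no two `P₃` with centres on the same side, no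
`P₄ + K₂` and no `3K₂`: the signs of the remaining edges of each of these configurations always
yield some `Mᵢ`. Then the middle edge of a negative `P₄` meets all negative edges, and if no edge
does, repeatedly picking a negative edge that avoids a given edge produces a negative `P₄` or one
of the excluded configurations.
-/

theorem Set.Finite.exists_list_pairwise_lt {α β : Type*} [LinearOrder β] {s : Set α}
    (hs : s.Finite) {ρ : α → β} (hρ : Set.InjOn ρ s) :
    ∃ l : List α, (∀ x, x ∈ s ↔ x ∈ l) ∧ l.Pairwise (ρ · < ρ ·) := by
  classical
  let le : α → α → Bool := fun x y => decide (ρ x ≤ ρ y)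
  have hperm := List.mergeSort_perm hs.toFinset.toList le
  have hmem : ∀ x, x ∈ s ↔ x ∈ hs.toFinset.toList.mergeSort le := by simp [hperm.mem_iff]
  refine ⟨_, hmem, ?_⟩
  have hle := List.pairwise_mergeSort (le := le) (by simpa [le] using fun _ _ _ => le_trans)
    (by simpa [le] using fun a b => le_total (ρ a) (ρ b)) hs.toFinset.toList
  refine (hle.and (hperm.nodup_iff.2 (Finset.nodup_toList _))).imp_of_mem fun hx hy h => ?_
  exact lt_of_le_of_ne (by simpa [le] using h.1) fun h' =>
    h.2 (hρ ((hmem _).2 hx) ((hmem _).2 hy) h')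

def Sym2.lexKey {α β : Type*} [LinearOrder β] (key : α → β) (e : Sym2 α) : β ×ₗ β :=
  toLex ((e.map key).inf, (e.map key).sup)

theorem Sym2.lexKey_mk_of_le {α β : Type*} [LinearOrder β] {key : α → β} {a b : α}
    (h : key a ≤ key b) : Sym2.lexKey key s(a, b) = toLex (key a, key b) := by
  simp [Sym2.lexKey, h]

theorem Sym2.lexKey_injective {α β : Type*} [LinearOrder β] {key : α → β}
    (hkey : Function.Injective key) : Function.Injective (Sym2.lexKey key) := fun _ _ h =>
  Sym2.map.injective hkey (Sym2.inf_eq_inf_and_sup_eq_sup.1 (Prod.ext_iff.1 (toLex.injective h)))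

namespace SignedBigraph

variable {V : Type u} {G : SignedBigraph V} {a b c d r : V}

def IsComplete (G : SignedBigraph V) : Prop := ∀ a b, G.side a ≠ G.side b → G.Adj a b

def NegAdj (G : SignedBigraph V) (a b : V) : Prop := G.Adj a b ∧ G.sign a b = false

def HasM (G : SignedBigraph V) : Prop := G.HasM1 ∨ G.HasM2 ∨ G.HasM3 ∨ G.HasM4 ∨ G.HasM5

def IsNegCover (G : SignedBigraph V) (r c : V) : Prop :=
  G.Adj r c ∧ ∀ ⦃u v⦄, G.NegAdj u v → G.side u = G.side r → u = r ∨ v = c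

theorem Adj.symm (h : G.Adj a b) : G.Adj b a := SimpleGraph.Adj.symm h

theorem Adj.ne (h : G.Adj a b) : a ≠ b := SimpleGraph.Adj.ne h

theorem Adj.side_ne (h : G.Adj a b) : G.side a ≠ G.side b := G.bipartite h

theorem NegAdj.symm (h : G.NegAdj a b) : G.NegAdj b a := ⟨h.1.symm, G.sign_symm a b ▸ h.2⟩

theorem side_eq_of_ne_of_ne (ha : G.side a ≠ G.side c) (hb : G.side b ≠ G.side c) :
    G.side a = G.side b := by
  revert ha hb; cases G.side a <;> cases G.side b <;> cases G.side c <;> simp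

theorem side_eq_of_adj_of_adj (hac : G.Adj a c) (hbc : G.Adj b c) : G.side a = G.side b :=
  side_eq_of_ne_of_ne hac.side_ne hbc.side_ne

theorem not_adj_of_adj_of_adj (hac : G.Adj a c) (hbc : G.Adj b c) : ¬ G.Adj a b :=
  fun hab => hab.side_ne (side_eq_of_adj_of_adj hac hbc)

theorem IsComplete.adj_of_side_eq (hG : G.IsComplete) (hab : G.Adj a b)
    (hc : G.side c = G.side a) (hd : G.side d = G.side b) : G.Adj c d :=
  hG c d (hc ▸ hd ▸ hab.side_ne)

theorem IsComplete.adj_of_path (hG : G.IsComplete) (hab : G.Adj a b) (hcb : G.Adj c b)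
    (hcd : G.Adj c d) : G.Adj a d :=
  hG.adj_of_side_eq hcd (side_eq_of_adj_of_adj hab hcb) rfl

theorem IsComplete.mem_edgeNbhd (hG : G.IsComplete) (hab : G.Adj a b) (hca : c ≠ a)
    (hcb : c ≠ b) : c ∈ G.edgeNbhd a b := by
  refine ⟨?_, by simp [hca, hcb]⟩
  by_cases hc : G.side c = G.side a
  · exact Or.inr (hG b c (hc ▸ hab.side_ne.symm))
  · exact Or.inl (hG a c (Ne.symm hc))

theorem deleteEdges_adj {s : Set (Sym2 V)} :
    (G.deleteEdges s).Adj a b ↔ G.Adj a b ∧ s(a, b) ∉ s :=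
  SimpleGraph.deleteEdges_adj

theorem deleteEdges_empty : G.deleteEdges ∅ = G := by
  cases G; simp [deleteEdges]

theorem deleteEdges_congr {s t : Set (Sym2 V)} (h : ∀ e ∈ G.graph.edgeSet, e ∈ s ↔ e ∈ t) :
    G.deleteEdges s = G.deleteEdges t := by
  simp only [deleteEdges, mk.injEq, and_true]
  ext a b
  simp only [SimpleGraph.deleteEdges_adj]
  exact and_congr_right fun hab => not_congr (h _ hab)

theorem SignedSimplicial.symm (h : G.SignedSimplicial a b) : G.SignedSimplicial b a := by
  refine ⟨h.1.symm, ?_⟩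
  simpa only [edgeNbhd, Set.union_comm, Set.pair_comm] using h.2

theorem HasM.exists_adj (h : G.HasM) : ∃ a b, G.Adj a b := by
  rcases h with ⟨u, -, v, -, -, huv, -⟩ | ⟨u, -, v, -, -, -, huv, -⟩ |
    ⟨u, -, v, -, -, -, -, huv, -⟩ | ⟨u, -, -, v, -, -, -, huv, -⟩ |
    ⟨u, -, -, v, -, -, -, huv, -⟩ <;>
  exact ⟨u, v, huv⟩

theorem hasM_of_negC4 {u1 u2 v1 v2 : V} (h11 : G.NegAdj u1 v1) (h12 : G.NegAdj u1 v2)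
    (h21 : G.NegAdj u2 v1) (h22 : G.NegAdj u2 v2) (hu : u1 ≠ u2) (hv : v1 ≠ v2) : G.HasM := by
  refine Or.inl ⟨u1, u2, v1, v2, ?_, h11.1, h12.1, h21.1, h22.1,
    not_adj_of_adj_of_adj h11.1 h21.1, not_adj_of_adj_of_adj h11.1.symm h12.1.symm,
    h11.2, h12.2, h21.2, h22.2⟩
  have := h11.1.ne; have := h12.1.ne; have := h21.1.ne; have := h22.1.ne
  simp [List.pairwise_cons, *]

theorem hasM_of_negP5 (hG : G.IsComplete) {u1 u2 v1 v2 v3 : V} (h11 : G.NegAdj u1 v1)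
    (h12 : G.NegAdj u1 v2) (h22 : G.NegAdj u2 v2) (h23 : G.NegAdj u2 v3) (hu : u1 ≠ u2)
    (hv12 : v1 ≠ v2) (hv13 : v1 ≠ v3) (hv23 : v2 ≠ v3) : G.HasM := by
  have a13 := hG.adj_of_path h12.1 h22.1 h23.1
  have a21 := hG.adj_of_path h22.1 h12.1 h11.1
  cases s13 : G.sign u1 v3
  · exact hasM_of_negC4 h12 ⟨a13, s13⟩ h22 h23 hu hv23
  cases s21 : G.sign u2 v1
  · exact hasM_of_negC4 h11 h12 ⟨a21, s21⟩ h22 hu hv12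
  refine Or.inr (Or.inl ⟨u1, u2, v1, v2, v3, ?_, h11.1, h12.1, a13, a21, h22.1, h23.1,
    not_adj_of_adj_of_adj h11.1 a21, not_adj_of_adj_of_adj h11.1.symm h12.1.symm,
    not_adj_of_adj_of_adj h11.1.symm a13.symm, not_adj_of_adj_of_adj h12.1.symm a13.symm,
    h11.2, h12.2, h22.2, h23.2, s13, s21⟩)
  have := h11.1.ne; have := h12.1.ne; have := a13.ne; have := a21.ne; have := h22.1.ne
  have := h23.1.ne
  simp [List.pairwise_cons, *]

theorem hasM_of_two_negP3 (hG : G.IsComplete) {u1 u2 v1 v2 v3 v4 : V} (h11 : G.NegAdj u1 v1)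
    (h12 : G.NegAdj u1 v2) (h23 : G.NegAdj u2 v3) (h24 : G.NegAdj u2 v4)
    (hu : G.side u1 = G.side u2) (hu12 : u1 ≠ u2) (hv12 : v1 ≠ v2) (hv13 : v1 ≠ v3)
    (hv14 : v1 ≠ v4) (hv23 : v2 ≠ v3) (hv24 : v2 ≠ v4) (hv34 : v3 ≠ v4) : G.HasM := by
  have a13 := hG.adj_of_side_eq h23.1 hu rfl
  have a14 := hG.adj_of_side_eq h24.1 hu rfl
  have a21 := hG.adj_of_side_eq h11.1 hu.symm rfl
  have a22 := hG.adj_of_side_eq h12.1 hu.symm rfl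
  cases s13 : G.sign u1 v3
  · exact hasM_of_negP5 hG h11 ⟨a13, s13⟩ h23 h24 hu12 hv13 hv14 hv34
  cases s14 : G.sign u1 v4
  · exact hasM_of_negP5 hG h11 ⟨a14, s14⟩ h24 h23 hu12 hv14 hv13 hv34.symm
  cases s21 : G.sign u2 v1
  · exact hasM_of_negP5 hG h23 ⟨a21, s21⟩ h11 h12 hu12.symm hv13.symm hv23.symm hv12
  cases s22 : G.sign u2 v2
  · exact hasM_of_negP5 hG h23 ⟨a22, s22⟩ h12 h11 hu12.symm hv23.symm hv13.symm hv12.symm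
  refine Or.inr (Or.inr (Or.inl ⟨u1, u2, v1, v2, v3, v4, ?_, h11.1, h12.1, a13, a14, a21, a22,
    h23.1, h24.1, not_adj_of_adj_of_adj h11.1 a21, not_adj_of_adj_of_adj h11.1.symm h12.1.symm,
    not_adj_of_adj_of_adj h11.1.symm a13.symm, not_adj_of_adj_of_adj h11.1.symm a14.symm,
    not_adj_of_adj_of_adj h12.1.symm a13.symm, not_adj_of_adj_of_adj h12.1.symm a14.symm,
    not_adj_of_adj_of_adj h23.1.symm h24.1.symm, h11.2, h12.2, h23.2, h24.2, s13, s14, s21, s22⟩))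
  have := h11.1.ne; have := h12.1.ne; have := a13.ne; have := a14.ne; have := a21.ne
  have := a22.ne; have := h23.1.ne; have := h24.1.ne
  simp [List.pairwise_cons, *]

theorem hasM_of_negP4_negK2 (hG : G.IsComplete) {x1 x2 x3 y1 y2 y3 : V} (h11 : G.NegAdj x1 y1)
    (h12 : G.NegAdj x1 y2) (h22 : G.NegAdj x2 y2) (h33 : G.NegAdj x3 y3)
    (hx : G.side x3 = G.side x1) (hx12 : x1 ≠ x2) (hx13 : x1 ≠ x3) (hx23 : x2 ≠ x3)
    (hy12 : y1 ≠ y2) (hy13 : y1 ≠ y3) (hy23 : y2 ≠ y3) : G.HasM := by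
  have hx2 : G.side x2 = G.side x3 := (side_eq_of_adj_of_adj h22.1 h12.1).trans hx.symm
  have a13 := hG.adj_of_side_eq h33.1 hx.symm rfl
  have a21 := hG.adj_of_path h22.1 h12.1 h11.1
  have a23 := hG.adj_of_side_eq h33.1 hx2 rfl
  have a31 := hG.adj_of_side_eq h11.1 hx rfl
  have a32 := hG.adj_of_side_eq h12.1 hx rfl
  cases s21 : G.sign x2 y1
  · exact hasM_of_negC4 h11 h12 ⟨a21, s21⟩ h22 hx12 hy12
  cases s13 : G.sign x1 y3
  · exact hasM_of_negP5 hG h22.symm h12.symm (NegAdj.symm ⟨a13, s13⟩) h33.symm hy23 hx12.symm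
      hx23 hx13
  cases s23 : G.sign x2 y3
  · exact hasM_of_negP5 hG h11 h12 h22 ⟨a23, s23⟩ hx12 hy12 hy13 hy23
  cases s31 : G.sign x3 y1
  · exact hasM_of_negP5 hG h33 ⟨a31, s31⟩ h11 h12 hx13.symm hy13.symm hy23.symm hy12
  cases s32 : G.sign x3 y2
  · exact hasM_of_negP5 hG h11 h12 ⟨a32, s32⟩ h33 hx13 hy12 hy13 hy23
  refine Or.inr (Or.inr (Or.inr (Or.inr ⟨x1, x2, x3, y1, y2, y3, ?_, h11.1, h12.1, a13, a21,
    h22.1, a23, a31, a32, h33.1, not_adj_of_adj_of_adj h11.1 a21, not_adj_of_adj_of_adj h11.1 a31,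
    not_adj_of_adj_of_adj a21 a31, not_adj_of_adj_of_adj h11.1.symm h12.1.symm,
    not_adj_of_adj_of_adj h11.1.symm a13.symm, not_adj_of_adj_of_adj h12.1.symm a13.symm,
    h11.2, h12.2, h22.2, h33.2, s13, s21, s23, s31, s32⟩)))
  have := h11.1.ne; have := h12.1.ne; have := a13.ne; have := a21.ne; have := h22.1.ne
  have := a23.ne; have := a31.ne; have := a32.ne; have := h33.1.ne
  simp [List.pairwise_cons, *]

theorem hasM_of_three_negK2 (hG : G.IsComplete) {x1 x2 x3 y1 y2 y3 : V} (h11 : G.NegAdj x1 y1)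
    (h22 : G.NegAdj x2 y2) (h33 : G.NegAdj x3 y3) (hx2 : G.side x2 = G.side x1)
    (hx3 : G.side x3 = G.side x1) (hx12 : x1 ≠ x2) (hx13 : x1 ≠ x3) (hx23 : x2 ≠ x3)
    (hy12 : y1 ≠ y2) (hy13 : y1 ≠ y3) (hy23 : y2 ≠ y3) : G.HasM := by
  have a12 := hG.adj_of_side_eq h22.1 hx2.symm rfl
  have a13 := hG.adj_of_side_eq h33.1 hx3.symm rfl
  have a21 := hG.adj_of_side_eq h11.1 hx2 rfl
  have a23 := hG.adj_of_side_eq h33.1 (hx2.trans hx3.symm) rfl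
  have a31 := hG.adj_of_side_eq h11.1 hx3 rfl
  have a32 := hG.adj_of_side_eq h22.1 (hx3.trans hx2.symm) rfl
  cases s12 : G.sign x1 y2
  · exact hasM_of_negP4_negK2 hG h11 ⟨a12, s12⟩ h22 h33 hx3 hx12 hx13 hx23 hy12 hy13 hy23
  cases s13 : G.sign x1 y3
  · exact hasM_of_negP4_negK2 hG h11 ⟨a13, s13⟩ h33 h22 hx2 hx13 hx12 hx23.symm hy13 hy12
      hy23.symm
  cases s21 : G.sign x2 y1
  · exact hasM_of_negP4_negK2 hG h22 ⟨a21, s21⟩ h11 h33 (hx3.trans hx2.symm) hx12.symm hx23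
      hx13 hy12.symm hy23 hy13
  cases s23 : G.sign x2 y3
  · exact hasM_of_negP4_negK2 hG h22 ⟨a23, s23⟩ h33 h11 hx2.symm hx23 hx12.symm hx13.symm hy23
      hy12.symm hy13.symm
  cases s31 : G.sign x3 y1
  · exact hasM_of_negP4_negK2 hG h33 ⟨a31, s31⟩ h11 h22 (hx2.trans hx3.symm) hx13.symm
      hx23.symm hx12 hy13.symm hy23.symm hy12
  cases s32 : G.sign x3 y2
  · exact hasM_of_negP4_negK2 hG h33 ⟨a32, s32⟩ h22 h11 hx3.symm hx23.symm hx13.symm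
      hx12.symm hy23.symm hy13.symm hy12.symm
  refine Or.inr (Or.inr (Or.inr (Or.inl ⟨x1, x2, x3, y1, y2, y3, ?_, h11.1, a12, a13, a21,
    h22.1, a23, a31, a32, h33.1, not_adj_of_adj_of_adj h11.1 a21, not_adj_of_adj_of_adj h11.1 a31,
    not_adj_of_adj_of_adj a21 a31, not_adj_of_adj_of_adj h11.1.symm a12.symm,
    not_adj_of_adj_of_adj h11.1.symm a13.symm, not_adj_of_adj_of_adj a12.symm a13.symm,
    h11.2, h22.2, h33.2, s12, s13, s21, s23, s31, s32⟩)))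
  have := h11.1.ne; have := a12.ne; have := a13.ne; have := a21.ne; have := h22.1.ne
  have := a23.ne; have := a31.ne; have := a32.ne; have := h33.1.ne
  simp [List.pairwise_cons, *]

theorem IsNegCover.symm (h : G.IsNegCover r c) : G.IsNegCover c r := by
  refine ⟨h.1.symm, fun u v huv hu => (h.2 huv.symm ?_).symm⟩
  exact side_eq_of_ne_of_ne huv.1.symm.side_ne (hu ▸ h.1.side_ne)

theorem IsNegCover.exists_side_eq (h : G.IsNegCover r c) (p : V) :
    ∃ r' c', G.IsNegCover r' c' ∧ G.side p = G.side r' := by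
  by_cases hp : G.side p = G.side r
  · exact ⟨r, c, h, hp⟩
  · exact ⟨c, r, h.symm, side_eq_of_ne_of_ne hp h.1.symm.side_ne⟩

theorem IsNegCover.eq_of_negAdj_of_negAdj {u v w : V} (h : G.IsNegCover r c)
    (huv : G.NegAdj u v) (huw : G.NegAdj u w) (hvw : v ≠ w) (hu : G.side u = G.side r) :
    u = r := by
  rcases h.2 huv hu with rfl | rfl
  · rfl
  · exact (h.2 huw hu).resolve_right (Ne.symm hvw)

theorem IsNegCover.not_hasM (h : G.IsNegCover r c) : ¬ G.HasM := by
  rintro (⟨u1, u2, v1, v2, hd, a11, a12, a21, a22, -, -, s11, s12, s21, s22⟩ |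
    ⟨u1, u2, v1, v2, v3, hd, a11, a12, -, -, a22, a23, -, -, -, -, s11, s12, s22, s23, -⟩ |
    ⟨u1, u2, v1, v2, v3, v4, hd, a11, a12, a13, -, -, -, a23, a24, -, -, -, -, -, -, -, s11,
      s12, s23, s24, -⟩ |
    ⟨u1, u2, u3, v1, v2, v3, hd, a11, a12, a13, -, a22, -, -, -, a33, -, -, -, -, -, -, s11, s22,
      s33, -⟩ |
    ⟨u1, u2, u3, v1, v2, v3, hd, a11, a12, a13, -, a22, -, -, -, a33, -, -, -, -, -, -, s11, s12,
      s22, s33, -⟩) <;>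
  obtain ⟨r, c, h, hs⟩ := h.exists_side_eq u1 <;>
  simp only [List.pairwise_cons, List.mem_cons, List.not_mem_nil, or_false, forall_eq_or_imp,
    forall_eq, false_implies, implies_true, List.Pairwise.nil, and_true] at hd
  · obtain ⟨⟨hu, -⟩, -, hv⟩ := hd
    have hs2 := (side_eq_of_adj_of_adj a21 a11).trans hs
    exact hu ((h.eq_of_negAdj_of_negAdj ⟨a11, s11⟩ ⟨a12, s12⟩ hv hs).trans
      (h.eq_of_negAdj_of_negAdj ⟨a21, s21⟩ ⟨a22, s22⟩ hv hs2).symm)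
  · obtain ⟨⟨hu, -⟩, -, ⟨hv12, -⟩, hv23⟩ := hd
    have hs2 := (side_eq_of_adj_of_adj a22 a12).trans hs
    exact hu ((h.eq_of_negAdj_of_negAdj ⟨a11, s11⟩ ⟨a12, s12⟩ hv12 hs).trans
      (h.eq_of_negAdj_of_negAdj ⟨a22, s22⟩ ⟨a23, s23⟩ hv23 hs2).symm)
  · obtain ⟨⟨hu, -⟩, -, ⟨hv12, -⟩, -, hv34⟩ := hd
    have hs2 := (side_eq_of_adj_of_adj a23 a13).trans hs
    exact hu ((h.eq_of_negAdj_of_negAdj ⟨a11, s11⟩ ⟨a12, s12⟩ hv12 hs).trans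
      (h.eq_of_negAdj_of_negAdj ⟨a23, s23⟩ ⟨a24, s24⟩ hv34 hs2).symm)
  · obtain ⟨⟨hu12, hu13, -⟩, ⟨hu23, -⟩, -, ⟨hv12, hv13⟩, hv23⟩ := hd
    have c1 := h.2 ⟨a11, s11⟩ hs
    have c2 := h.2 ⟨a22, s22⟩ ((side_eq_of_adj_of_adj a22 a12).trans hs)
    have c3 := h.2 ⟨a33, s33⟩ ((side_eq_of_adj_of_adj a33 a13).trans hs)
    grind
  · obtain ⟨⟨hu12, hu13, -⟩, ⟨hu23, -⟩, -, ⟨hv12, hv13⟩, hv23⟩ := hd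
    have c1 := h.eq_of_negAdj_of_negAdj ⟨a11, s11⟩ ⟨a12, s12⟩ hv12 hs
    have c2 := h.2 ⟨a22, s22⟩ ((side_eq_of_adj_of_adj a22 a12).trans hs)
    have c3 := h.2 ⟨a33, s33⟩ ((side_eq_of_adj_of_adj a33 a13).trans hs)
    grind

theorem SignedSimplicial.isNegCover (hG : G.IsComplete) (h : G.SignedSimplicial a b) :
    G.IsNegCover a b := by
  refine ⟨h.1, fun u v huv hu => ?_⟩
  by_contra! hne
  have hub : u ≠ b := ne_of_apply_ne G.side (hu ▸ h.1.side_ne)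
  have hva : v ≠ a := ne_of_apply_ne G.side (hu ▸ huv.1.side_ne.symm)
  have hpos := (h.2 u (hG.mem_edgeNbhd h.1 hne.1 hub) v (hG.mem_edgeNbhd h.1 hva hne.2)
    huv.1.side_ne).2
  exact Bool.false_ne_true (huv.2.symm.trans hpos)

theorem IsChordal.exists_isNegCover (hG : G.IsComplete) (h : G.IsChordal) (hab : G.Adj a b) :
    ∃ r c, G.IsNegCover r c := by
  obtain ⟨l, -, hmem, hstep⟩ := h
  obtain ⟨r, c, -, hrc⟩ := hstep 0 (List.length_pos_of_mem ((hmem s(a, b)).1 hab))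
  simp only [List.take_zero, List.not_mem_nil, Set.ofPred_false, deleteEdges_empty] at hrc
  exact ⟨r, c, hrc.isNegCover hG⟩

theorem exists_negAdj_of_not_isNegCover (hrc : G.Adj r c) (h : ¬ G.IsNegCover r c) :
    ∃ u v, G.NegAdj u v ∧ G.side u = G.side r ∧ u ≠ r ∧ v ≠ c := by
  simpa [IsNegCover, hrc] using h

theorem isNegCover_of_negP4 (hG : G.IsComplete) (hM : ¬ G.HasM) (hab : G.NegAdj a b)
    (hcb : G.NegAdj c b) (hcd : G.NegAdj c d) (hac : a ≠ c) (hbd : b ≠ d) :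
    G.IsNegCover c b := by
  refine ⟨hcb.1, fun u v huv hu => ?_⟩
  by_contra! ⟨huc, hvb⟩
  apply hM
  by_cases hua : u = a
  · subst hua
    by_cases hvd : v = d
    · subst hvd
      exact hasM_of_negC4 hab huv hcb hcd hac hbd
    · exact hasM_of_negP5 hG huv hab hcb hcd hac hvb hvd hbd
  · by_cases hvd : v = d
    · subst hvd
      exact hasM_of_negP5 hG hab.symm hcb.symm hcd.symm huv.symm hbd hac (Ne.symm hua) (Ne.symm huc)
    · exact hasM_of_negP4_negK2 hG hcd hcb hab huv hu (Ne.symm hac) (Ne.symm huc) (Ne.symm hua)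
        hbd.symm (Ne.symm hvd) (Ne.symm hvb)

theorem exists_isNegCover_of_negK2_negP3 (hG : G.IsComplete) (hM : ¬ G.HasM)
    {x1 x2 y1 y2 y3 : V} (h11 : G.NegAdj x1 y1) (h22 : G.NegAdj x2 y2) (h23 : G.NegAdj x2 y3)
    (n12 : ¬ G.NegAdj x1 y2) (n21 : ¬ G.NegAdj x2 y1) (hx : G.side x2 = G.side x1)
    (hx12 : x1 ≠ x2) (hy23 : y2 ≠ y3) : ∃ r c, G.IsNegCover r c := by
  by_contra! hno
  have hy12 : y1 ≠ y2 := by rintro rfl; exact n21 h22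
  have hy13 : y1 ≠ y3 := by rintro rfl; exact n21 h23
  by_cases n13 : G.NegAdj x1 y3
  · exact hno _ _ (isNegCover_of_negP4 hG hM h11.symm n13.symm h23.symm hy13 hx12)
  obtain ⟨x4, y4, h44, hx4, hx42, hy41⟩ :=
    exists_negAdj_of_not_isNegCover (hG.adj_of_side_eq h11.1 hx rfl) (hno x2 y1)
  by_cases hx41 : x4 = x1
  · subst hx41
    have hy42 : y4 ≠ y2 := by rintro rfl; exact n12 h44
    have hy43 : y4 ≠ y3 := by rintro rfl; exact n13 h44
    exact hM (hasM_of_two_negP3 hG h11 h44 h22 h23 hx.symm hx12 (Ne.symm hy41) hy12 hy13 hy42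
      hy43 hy23)
  by_cases hy42 : y4 = y2
  · subst hy42
    exact hno _ _ (isNegCover_of_negP4 hG hM h44 h22 h23 hx42 hy23)
  by_cases hy43 : y4 = y3
  · subst hy43
    exact hno _ _ (isNegCover_of_negP4 hG hM h44 h23 h22 hx42 hy23.symm)
  exact hM (hasM_of_three_negK2 hG h11 h22 h44 hx (hx4.trans hx) hx12 (Ne.symm hx41)
    (Ne.symm hx42) hy12 (Ne.symm hy41) (Ne.symm hy42))

theorem exists_isNegCover (hG : G.IsComplete) (hM : ¬ G.HasM) (hab : G.Adj a b) :
    ∃ r c, G.IsNegCover r c := by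
  by_contra! hno
  obtain ⟨x1, y1, h11, -⟩ := exists_negAdj_of_not_isNegCover hab (hno a b)
  obtain ⟨x2, y2, h22, hx2, hx21, hy21⟩ := exists_negAdj_of_not_isNegCover h11.1 (hno x1 y1)
  by_cases n12 : G.NegAdj x1 y2
  · exact hno _ _ (isNegCover_of_negP4 hG hM h11.symm n12.symm h22.symm (Ne.symm hy21)
      (Ne.symm hx21))
  by_cases n21 : G.NegAdj x2 y1
  · exact hno _ _ (isNegCover_of_negP4 hG hM h22.symm n21.symm h11.symm hy21 hx21)
  have a12 := hG.adj_of_side_eq h22.1 hx2.symm rfl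
  obtain ⟨x3, y3, h33, hx3, hx31, hy32⟩ := exists_negAdj_of_not_isNegCover a12 (hno x1 y2)
  by_cases hx32 : x3 = x2
  · subst hx32
    obtain ⟨r, c, h⟩ := exists_isNegCover_of_negK2_negP3 hG hM h11 h22 h33 n12 n21 hx2
      (Ne.symm hx21) (Ne.symm hy32)
    exact hno r c h
  by_cases hy31 : y3 = y1
  · subst hy31
    obtain ⟨r, c, h⟩ := exists_isNegCover_of_negK2_negP3 hG hM h22.symm h11.symm h33.symm
      (fun h => n12 h.symm) (fun h => n21 h.symm) (side_eq_of_adj_of_adj h11.1.symm a12.symm)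
      hy21 (Ne.symm hx31)
    exact hno r c h
  exact hM (hasM_of_three_negK2 hG h11 h22 h33 hx2 hx3 (Ne.symm hx21) (Ne.symm hx31)
    (Ne.symm hx32) (Ne.symm hy21) (Ne.symm hy31) (Ne.symm hy32))

theorem isChordal_of_rank [Finite V] {β : Type*} [LinearOrder β] (ρ : Sym2 V → β)
    (hρ : Set.InjOn ρ G.graph.edgeSet)
    (h : ∀ ⦃a b⦄, G.Adj a b → (G.deleteEdges {e | ρ e < ρ s(a, b)}).SignedSimplicial a b) :
    G.IsChordal := by
  obtain ⟨l, hmem, hl⟩ := (Set.toFinite G.graph.edgeSet).exists_list_pairwise_lt hρ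
  refine ⟨l, hl.imp fun hlt => ne_of_apply_ne ρ hlt.ne, hmem, fun i hi => ?_⟩
  obtain ⟨⟨a, b⟩, hab⟩ := Sym2.mk_surjective l[i]
  simp only [Function.uncurry_apply_pair] at hab
  have hadj : G.Adj a b := (hmem s(a, b)).2 (hab ▸ List.getElem_mem hi)
  refine ⟨a, b, hab.symm, ?_⟩
  convert h hadj using 1
  refine deleteEdges_congr fun e he => ?_
  simp only [Set.mem_ofPred_eq, List.mem_take_iff_getElem]
  rw [hab]
  constructor
  · rintro ⟨j, hj, rfl⟩
    exact List.pairwise_iff_getElem.1 hl _ _ _ _ (lt_of_lt_of_le hj (min_le_left _ _))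
  · intro hlt
    obtain ⟨j, hj, rfl⟩ := List.getElem_of_mem ((hmem e).1 he)
    refine ⟨j, lt_min (not_le.1 fun hij => ?_) hj, rfl⟩
    rcases hij.lt_or_eq with hij | rfl
    · exact (List.pairwise_iff_getElem.1 hl _ _ _ _ hij).not_gt hlt
    · exact lt_irrefl _ hlt

section LexOrder

variable {β : Type*} [LinearOrder β] {key : V → β}

theorem lexKey_lt_of_mem_edgeNbhd (hkey : Function.Injective key)
    (hlt : ∀ x y, G.side x = G.side r → G.side y ≠ G.side r → key x < key y) {x y p : V}
    (hx : G.side x = G.side r) (hxy : G.Adj x y)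
    (hp : p ∈ (G.deleteEdges {e | Sym2.lexKey key e < Sym2.lexKey key s(x, y)}).edgeNbhd x y) :
    (G.side p = G.side r → key x < key p) ∧ (G.side p ≠ G.side r → key y < key p) := by
  have hy : G.side y ≠ G.side r := hx ▸ hxy.side_ne.symm
  have hρ : ∀ {p q}, G.side p = G.side r → G.side q ≠ G.side r →
      Sym2.lexKey key s(p, q) = toLex (key p, key q) := fun hp hq =>
    Sym2.lexKey_mk_of_le (hlt _ _ hp hq).le
  obtain ⟨hadj | hadj, hpxy⟩ := hp <;> obtain ⟨hadj, hkept⟩ := deleteEdges_adj.1 hadj <;>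
    rw [Set.mem_ofPred_eq, hρ hx hy] at hkept
  · refine ⟨fun hp => absurd (hx.trans hp.symm) hadj.side_ne, fun hp => ?_⟩
    rw [hρ hx hp, Prod.Lex.toLex_lt_toLex] at hkept
    exact lt_of_le_of_ne (not_lt.1 fun h => hkept (Or.inr ⟨rfl, h⟩))
      (hkey.ne fun h => hpxy (.inr h.symm))
  · refine ⟨fun hp => ?_, fun hp => absurd (side_eq_of_ne_of_ne hp hy) hadj.side_ne.symm⟩
    rw [Sym2.eq_swap, hρ hp hy, Prod.Lex.toLex_lt_toLex] at hkept
    exact lt_of_le_of_ne (not_lt.1 fun h => hkept (Or.inl h)) (hkey.ne fun h => hpxy (.inl h.symm))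

theorem signedSimplicial_deleteEdges_lexKey (hG : G.IsComplete) (hcov : G.IsNegCover r c)
    (hkey : Function.Injective key)
    (hlt : ∀ x y, G.side x = G.side r → G.side y ≠ G.side r → key x < key y)
    (hr : ∀ x, G.side x = G.side r → key r ≤ key x)
    (hc : ∀ y, G.side y ≠ G.side r → key c ≤ key y) {x y : V} (hx : G.side x = G.side r)
    (hxy : G.Adj x y) :
    (G.deleteEdges {e | Sym2.lexKey key e < Sym2.lexKey key s(x, y)}).SignedSimplicial x y := by
  have hy : G.side y ≠ G.side r := hx ▸ hxy.side_ne.symm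
  have hpos : ∀ p q, G.side p = G.side r → G.side q ≠ G.side r → key x < key p →
      key y < key q →
      (G.deleteEdges {e | Sym2.lexKey key e < Sym2.lexKey key s(x, y)}).Adj p q ∧
        G.sign p q = true := by
    intro p q hp hq hkp hkq
    have hpq : G.Adj p q := hG p q (hp ▸ fun h => hq h.symm)
    refine ⟨deleteEdges_adj.2 ⟨hpq, ?_⟩, ?_⟩
    · rw [Set.mem_ofPred_eq, Sym2.lexKey_mk_of_le (hlt _ _ hp hq).le,
        Sym2.lexKey_mk_of_le (hlt _ _ hx hy).le, Prod.Lex.toLex_lt_toLex]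
      exact fun h => h.elim (lt_asymm hkp) fun h => hkp.ne' h.1
    · cases hs : G.sign p q
      · rcases hcov.2 ⟨hpq, hs⟩ hp with h | h
        · exact absurd (hr x hx) (not_le.2 (h ▸ hkp))
        · exact absurd (hc y hy) (not_le.2 (h ▸ hkq))
      · rfl
  refine ⟨deleteEdges_adj.2 ⟨hxy, lt_irrefl (Sym2.lexKey key s(x, y))⟩, fun p hp q hq hpq => ?_⟩
  have hp' := lexKey_lt_of_mem_edgeNbhd hkey hlt hx hxy hp
  have hq' := lexKey_lt_of_mem_edgeNbhd hkey hlt hx hxy hq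
  by_cases hpr : G.side p = G.side r
  · have hqr : G.side q ≠ G.side r := hpr ▸ hpq.symm
    exact hpos p q hpr hqr (hp'.1 hpr) (hq'.2 hqr)
  · have hqr : G.side q = G.side r := side_eq_of_ne_of_ne hpq.symm (by rwa [ne_comm])
    have := hpos q p hqr hpr (hq'.1 hqr) (hp'.2 hpr)
    exact ⟨this.1.symm, G.sign_symm p q ▸ this.2⟩

theorem isChordal_of_lexKey [Finite V] (hG : G.IsComplete) (hcov : G.IsNegCover r c)
    (hkey : Function.Injective key)
    (hlt : ∀ x y, G.side x = G.side r → G.side y ≠ G.side r → key x < key y)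
    (hr : ∀ x, G.side x = G.side r → key r ≤ key x)
    (hc : ∀ y, G.side y ≠ G.side r → key c ≤ key y) : G.IsChordal := by
  refine isChordal_of_rank (Sym2.lexKey key) (Sym2.lexKey_injective hkey).injOn fun a b hab => ?_
  by_cases ha : G.side a = G.side r
  · exact signedSimplicial_deleteEdges_lexKey hG hcov hkey hlt hr hc ha hab
  · have hb := side_eq_of_ne_of_ne hab.side_ne.symm (Ne.symm ha)
    rw [Sym2.eq_swap]
    exact (signedSimplicial_deleteEdges_lexKey hG hcov hkey hlt hr hc hb hab.symm).symm

end LexOrder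

theorem isChordal_of_isNegCover [Fintype V] (hG : G.IsComplete)
    (hcov : G.IsNegCover r c) : G.IsChordal := by
  classical
  let cls : V → ℕ := fun v =>
    if G.side v = G.side r then (if v = r then 0 else 1) else (if v = c then 2 else 3)
  have hcr : G.side c ≠ G.side r := hcov.1.side_ne.symm
  refine isChordal_of_lexKey (key := fun v => toLex (cls v, (Fintype.equivFin V v : ℕ))) hG hcov
    (fun a b h => (Fintype.equivFin V).injective (Fin.ext (Prod.ext_iff.1 (toLex.injective h)).2))
    (fun x y hx hy => Prod.Lex.toLex_lt_toLex.2 (Or.inl ?_)) (fun x hx => ?_) (fun y hy => ?_)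
  · simp only [cls, hx, hy, if_true, if_false]
    split_ifs <;> omega
  · by_cases hxr : x = r
    · rw [hxr]
    · exact (Prod.Lex.toLex_lt_toLex.2 (Or.inl (by simp [cls, hx, hxr]))).le
  · by_cases hyc : y = c
    · rw [hyc]
    · exact (Prod.Lex.toLex_lt_toLex.2 (Or.inl (by simp [cls, hy, hyc, hcr]))).le

theorem isChordal_of_forall_not_adj (h : ∀ a b, ¬ G.Adj a b) : G.IsChordal := by
  refine ⟨[], List.nodup_nil, fun e => ?_, fun i hi => absurd hi (Nat.not_lt_zero i)⟩
  induction e using Sym2.ind with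
  | _ a b => exact ⟨fun hab => (h a b hab).elim, fun he => by simp at he⟩

end SignedBigraph

open SignedBigraph in
/-- Theorem 2.3: a signed complete bigraph is chordal iff it
contains none of `M₁, …, M₅` as an induced subgraph. -/
theorem signedCompleteBigraph_isChordal_iff_M
    {V : Type u} [Fintype V] (G : SignedBigraph V)
    (hcomp : ∀ a b : V, G.side a ≠ G.side b → G.Adj a b) :
    G.IsChordal ↔ ¬ (G.HasM1 ∨ G.HasM2 ∨ G.HasM3 ∨ G.HasM4 ∨ G.HasM5) := by
  constructor
  · intro hch hM
    obtain ⟨a, b, hab⟩ := HasM.exists_adj hM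
    obtain ⟨r, c, hcov⟩ := hch.exists_isNegCover hcomp hab
    exact hcov.not_hasM hM
  · intro hM
    by_cases hedge : ∃ a b, G.Adj a b
    · obtain ⟨a, b, hab⟩ := hedge
      obtain ⟨r, c, hcov⟩ := exists_isNegCover hcomp hM hab
      exact isChordal_of_isNegCover hcomp hcov
    · exact isChordal_of_forall_not_adj (by simpa using hedge)
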